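/- arXiv:1408.4104 — 2 statements merged into one kernel-verified Lean document; each statement's English description precedes it below -/
import Mathlib

section
/- Let V be a real Hilbert space with norm ‖·‖, let a_h, a_h^+ : V × V → ℝ be bilinear forms satisfying a_h(v,v) ≥ α‖v‖², a_h^+(v,v) ≥ α‖v‖², |a_h(v,w)| ≤ M‖v‖‖w‖, |a_h^+(v,w)| ≤ M‖v‖‖w‖ for all v, w ∈ V, with α, M > 0. Let V_h and V_h^+ be subspaces of V, and for u ∈ V let r_h u ∈ V_h and r_h^+ u ∈ V_h^+ be the Galerkin projections, i.e. a_h(r_h u − u, w) = 0 for all w ∈ V_h and a_h^+(r_h^+ u − u, w) = 0 for all w ∈ V_h^+. Then for any e_h ∈ V_h and e_h^+ ∈ V_h^+: ‖r_h^+ u − r_h u‖ ≤ (M/α)‖r_h^+ u − r_h u − (e_h + e_h^+)‖ + (1/√α)(|a_h^+(r_h^+ u − u, e_h)|^{1/2} + |a_h(r_h u − u, e_h^+)|^{1/2} + |a_h^+(r_h u − u, e_h + e_h^+) − a_h(r_h u − u, e_h + e_h^+)|^{1/2}). -/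
/-!
Write `d = r⁺u - r u` and `e = e_h + e_h⁺`. Coercivity and boundedness of `a⁺` give
`α‖d‖² ≤ a⁺(d, d) = a⁺(d, d - e) + a⁺(d, e) ≤ M‖d‖‖d - e‖ + a⁺(d, e)`, and the two Galerkin
orthogonalities split `a⁺(d, e)` into the three consistency terms of the estimate. The resulting
quadratic inequality `α x² ≤ b x + T` in `x = ‖d‖` yields `x ≤ b / α + √T / √α`.
-/

theorem Real.sqrt_add_le_sqrt_add_sqrt {x y : ℝ} (hx : 0 ≤ x) (hy : 0 ≤ y) :
    √(x + y) ≤ √x + √y := by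
  rw [Real.sqrt_le_left (by positivity)]
  nlinarith [Real.sq_sqrt hx, Real.sq_sqrt hy, Real.sqrt_nonneg x, Real.sqrt_nonneg y]

theorem le_div_add_sqrt_div_sqrt_of_mul_sq_le {α b T x : ℝ} (hα : 0 < α) (hb : 0 ≤ b)
    (hT : 0 ≤ T) (h : α * x ^ 2 ≤ b * x + T) : x ≤ b / α + √T / √α := by
  obtain ⟨s, hs, rfl⟩ : ∃ s, 0 < s ∧ s ^ 2 = α := ⟨√α, by positivity, Real.sq_sqrt hα.le⟩
  obtain ⟨t, ht, rfl⟩ : ∃ t, 0 ≤ t ∧ t ^ 2 = T := ⟨√T, Real.sqrt_nonneg T, Real.sq_sqrt hT⟩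
  rw [Real.sqrt_sq hs.le, Real.sqrt_sq ht, div_add_div _ _ (by positivity) hs.ne',
    le_div_iff₀ (by positivity)]
  by_contra! hlt
  have hsx : b + s * t < s ^ 2 * x := by nlinarith
  have htx : t < s * x := by nlinarith
  nlinarith

theorem LinearMap.apply_sub_galerkin_eq {R V : Type*} [CommRing R] [AddCommGroup V] [Module R V]
    (a a' : V →ₗ[R] V →ₗ[R] R) {u p p' e e' : V}
    (horth : a (p - u) e = 0) (horth' : a' (p' - u) e' = 0) :
    a' (p' - p) (e + e') =
      a' (p' - u) e - a (p - u) e' - (a' (p - u) (e + e') - a (p - u) (e + e')) := by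
  have hsplit : a' (p' - p) (e + e') = a' (p' - u) (e + e') - a' (p - u) (e + e') := by
    rw [show p' - p = (p' - u) - (p - u) by abel, map_sub, LinearMap.sub_apply]
  have hadd' : a' (p' - u) (e + e') = a' (p' - u) e + a' (p' - u) e' := map_add _ _ _
  have hadd : a (p - u) (e + e') = a (p - u) e + a (p - u) e' := map_add _ _ _
  linear_combination hsplit + hadd' + horth' - hadd - horth

theorem LinearMap.mul_norm_sq_le_of_coercive {V : Type*} [SeminormedAddCommGroup V]
    [NormedSpace ℝ V] (a : V →ₗ[ℝ] V →ₗ[ℝ] ℝ) {α M : ℝ}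
    (hcoer : ∀ v : V, α * ‖v‖ ^ 2 ≤ a v v) (hbound : ∀ v w : V, |a v w| ≤ M * ‖v‖ * ‖w‖)
    (v w : V) : α * ‖v‖ ^ 2 ≤ M * ‖v - w‖ * ‖v‖ + a v w := by
  have hsplit : a v v = a v (v - w) + a v w := by rw [map_sub]; ring
  linarith [hcoer v, le_abs_self (a v (v - w)), hbound v (v - w)]

theorem stmt_5_general {V : Type*} [NormedAddCommGroup V] [InnerProductSpace ℝ V]
    (ah ahp : V →ₗ[ℝ] V →ₗ[ℝ] ℝ) (α M : ℝ) (hα : 0 < α) (hM : 0 < M)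
    (hcoerp : ∀ v : V, α * ‖v‖ ^ 2 ≤ ahp v v)
    (hboundp : ∀ v w : V, |ahp v w| ≤ M * ‖v‖ * ‖w‖)
    (Vh Vhp : Submodule ℝ V) (u rhu rhpu : V)
    (horth : ∀ w ∈ Vh, ah (rhu - u) w = 0)
    (horthp : ∀ w ∈ Vhp, ahp (rhpu - u) w = 0)
    (eh ehp : V) (heh : eh ∈ Vh) (hehp : ehp ∈ Vhp) :
    ‖rhpu - rhu‖ ≤
      (M / α) * ‖rhpu - rhu - (eh + ehp)‖
        + (1 / Real.sqrt α) *
          (Real.sqrt |ahp (rhpu - u) eh| + Real.sqrt |ah (rhu - u) ehp|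
            + Real.sqrt |ahp (rhu - u) (eh + ehp) - ah (rhu - u) (eh + ehp)|) := by
  set A := |ahp (rhpu - u) eh|
  set B := |ah (rhu - u) ehp|
  set C := |ahp (rhu - u) (eh + ehp) - ah (rhu - u) (eh + ehp)|
  have hquad : α * ‖rhpu - rhu‖ ^ 2 ≤
      M * ‖rhpu - rhu - (eh + ehp)‖ * ‖rhpu - rhu‖ + (A + B + C) := by
    have henergy := ahp.mul_norm_sq_le_of_coercive hcoerp hboundp (rhpu - rhu) (eh + ehp)
    rw [LinearMap.apply_sub_galerkin_eq ah ahp (horth eh heh) (horthp ehp hehp)] at henergy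
    linarith [le_abs_self (ahp (rhpu - u) eh), neg_abs_le (ah (rhu - u) ehp),
      neg_abs_le (ahp (rhu - u) (eh + ehp) - ah (rhu - u) (eh + ehp))]
  have hsqrt : √(A + B + C) ≤ √A + √B + √C := calc
    √(A + B + C) ≤ √(A + B) + √C := Real.sqrt_add_le_sqrt_add_sqrt (by positivity) (abs_nonneg _)
    _ ≤ √A + √B + √C := by
      gcongr; exact Real.sqrt_add_le_sqrt_add_sqrt (abs_nonneg _) (abs_nonneg _)
  calc ‖rhpu - rhu‖
      ≤ M * ‖rhpu - rhu - (eh + ehp)‖ / α + √(A + B + C) / √α :=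
        le_div_add_sqrt_div_sqrt_of_mul_sq_le hα (by positivity) (by positivity) hquad
    _ ≤ M / α * ‖rhpu - rhu - (eh + ehp)‖ + 1 / √α * (√A + √B + √C) := by
        rw [mul_div_right_comm, one_div_mul_eq_div]
        gcongr

/-- Abstract supercloseness estimate (Theorem 2.1). -/
theorem stmt_5 {V : Type*} [NormedAddCommGroup V] [InnerProductSpace ℝ V]
    (ah ahp : V →ₗ[ℝ] V →ₗ[ℝ] ℝ) (α M : ℝ) (hα : 0 < α) (hM : 0 < M)
    (hcoer : ∀ v : V, α * ‖v‖ ^ 2 ≤ ah v v)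
    (hcoerp : ∀ v : V, α * ‖v‖ ^ 2 ≤ ahp v v)
    (hbound : ∀ v w : V, |ah v w| ≤ M * ‖v‖ * ‖w‖)
    (hboundp : ∀ v w : V, |ahp v w| ≤ M * ‖v‖ * ‖w‖)
    (Vh Vhp : Submodule ℝ V) (u rhu rhpu : V)
    (hrh : rhu ∈ Vh) (hrhp : rhpu ∈ Vhp)
    (horth : ∀ w ∈ Vh, ah (rhu - u) w = 0)
    (horthp : ∀ w ∈ Vhp, ahp (rhpu - u) w = 0)
    (eh ehp : V) (heh : eh ∈ Vh) (hehp : ehp ∈ Vhp) :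
    ‖rhpu - rhu‖ ≤
      (M / α) * ‖rhpu - rhu - (eh + ehp)‖
        + (1 / Real.sqrt α) *
          (Real.sqrt |ahp (rhpu - u) eh| + Real.sqrt |ah (rhu - u) ehp|
            + Real.sqrt |ahp (rhu - u) (eh + ehp) - ah (rhu - u) (eh + ehp)|) :=
  stmt_5_general ah ahp α M hα hM hcoerp hboundp Vh Vhp u rhu rhpu horth horthp eh ehp heh hehp
end

section
/- Let h > 0 and let u : [0, 2h] → ℝ be the function u(x) = x^{2−1/p} − x with 2 < p < ∞. Let i_1 be the affine interpolant of u on the single interval [0, 2h] (agreeing with u at 0 and 2h), and let i_2 be the piecewise affine interpolant of u on the two intervals [0, 3h/2] and [3h/2, 2h]. Then there exists a constant C > 0 (depending on p but not on h) such that for all sufficiently small h, the L²(0,2h)-norm of i_1 − i_2 is at least C h^{5/2 − 1/p}. -/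
/-!
On `(0, 3h/2)` both interpolants are linear through the origin, so their difference is
`(s(2h) - s(3h/2)) x` with `s(t) = u(t)/t = t^{1-1/p} - 1`. By homogeneity the slope gap is
`(2^{1-1/p} - (3/2)^{1-1/p}) h^{1-1/p}`, positive since `1 - 1/p > 0`, and the `L²(0, 3h/2)`-norm
of `x` is a constant times `h^{3/2}`. The lower bound in fact holds for every `h > 0`.
-/

open MeasureTheory

/-- The function `u(x) = x^{2-1/p} - x`. -/
noncomputable def uFun (p x : ℝ) : ℝ := x ^ (2 - 1 / p) - x

/-- Affine interpolant of `u` on the single interval `[0, 2h]` (note `u 0 = 0`). -/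
noncomputable def interpOne (p h x : ℝ) : ℝ := (uFun p (2 * h) / (2 * h)) * x

/-- Piecewise affine interpolant of `u` on `[0, 3h/2]` and `[3h/2, 2h]`. -/
noncomputable def interpTwo (p h x : ℝ) : ℝ :=
  if x ≤ 3 * h / 2 then (uFun p (3 * h / 2) / (3 * h / 2)) * x
  else uFun p (3 * h / 2) +
    ((uFun p (2 * h) - uFun p (3 * h / 2)) / (2 * h - 3 * h / 2)) * (x - 3 * h / 2)

open Set

lemma eLpNorm_id_two_restrict_Ioo {b : ℝ} (hb : 0 ≤ b) :
    eLpNorm (fun x : ℝ => x) 2 (volume.restrict (Ioo 0 b)) =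
      ENNReal.ofReal (b ^ (3 / 2 : ℝ) / √3) := by
  have hmem : MemLp (fun x : ℝ => x) 2 (volume.restrict (Ioo 0 b)) :=
    MemLp.of_bound continuous_id.aestronglyMeasurable b <|
      ae_restrict_of_forall_mem measurableSet_Ioo fun x hx => by
        rw [Real.norm_eq_abs, abs_of_pos hx.1]; exact hx.2.le
  have hint : ∫ x in Ioo 0 b, ‖x‖ ^ (2 : ℝ) = b ^ 3 / 3 := by
    rw [setIntegral_congr_fun (g := fun x => x ^ 2) measurableSet_Ioo fun x _ => by
          simp only [Real.rpow_two, Real.norm_eq_abs, sq_abs],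
      ← integral_Ioc_eq_integral_Ioo, ← intervalIntegral.integral_of_le hb, integral_pow]
    norm_num
  rw [hmem.eLpNorm_eq_integral_rpow_norm two_ne_zero ENNReal.ofNat_ne_top, ENNReal.toReal_ofNat,
    hint, Real.div_rpow (by positivity) (by norm_num), Real.sqrt_eq_rpow, ← Real.rpow_natCast,
    ← Real.rpow_mul hb]
  norm_num

lemma eLpNorm_const_mul_id_two_restrict_Ioo (K : ℝ) {b : ℝ} (hb : 0 ≤ b) :
    eLpNorm (fun x : ℝ => K * x) 2 (volume.restrict (Ioo 0 b)) =
      ENNReal.ofReal (|K| * b ^ (3 / 2 : ℝ) / √3) := by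
  have hsmul := eLpNorm_const_smul K (fun x : ℝ => x) 2 (volume.restrict (Ioo 0 b))
  simp only [Pi.smul_def, smul_eq_mul] at hsmul
  rw [hsmul, eLpNorm_id_two_restrict_Ioo hb, ← ofReal_norm, Real.norm_eq_abs,
    ← ENNReal.ofReal_mul (abs_nonneg K), mul_div_assoc]

lemma uFun_div_self (p : ℝ) {t : ℝ} (ht : 0 < t) : uFun p t / t = t ^ (1 - 1 / p) - 1 := by
  rw [uFun, sub_div, div_self ht.ne', show (1 : ℝ) - 1 / p = (2 - 1 / p) - 1 by ring,
    Real.rpow_sub_one ht.ne']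

lemma uFun_slope_sub (p : ℝ) {h : ℝ} (hh : 0 < h) :
    uFun p (2 * h) / (2 * h) - uFun p (3 * h / 2) / (3 * h / 2) =
      (2 ^ (1 - 1 / p) - (3 / 2 : ℝ) ^ (1 - 1 / p)) * h ^ (1 - 1 / p) := by
  rw [uFun_div_self p (by positivity), uFun_div_self p (by positivity),
    show 3 * h / 2 = 3 / 2 * h by ring, Real.mul_rpow (by norm_num) hh.le,
    Real.mul_rpow (by norm_num) hh.le]
  ring

lemma interpOne_sub_interpTwo_of_le (p : ℝ) {h x : ℝ} (hh : 0 < h) (hx : x ≤ 3 * h / 2) :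
    interpOne p h x - interpTwo p h x =
      (2 ^ (1 - 1 / p) - (3 / 2 : ℝ) ^ (1 - 1 / p)) * h ^ (1 - 1 / p) * x := by
  rw [← uFun_slope_sub p hh, interpOne, interpTwo, if_pos hx]
  ring

/-- Lower bound `C h^{5/2 - 1/p}` on the `L²(0,2h)`-distance between the two
interpolants, for all sufficiently small `h`. -/
theorem stmt_10 (p : ℝ) (hp : 2 < p) :
    ∃ C > (0 : ℝ), ∃ h₀ > (0 : ℝ), ∀ h : ℝ, 0 < h → h ≤ h₀ →
      ENNReal.ofReal (C * h ^ (5 / 2 - 1 / p)) ≤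
        eLpNorm (fun x => interpOne p h x - interpTwo p h x) 2
          (volume.restrict (Set.Ioo (0 : ℝ) (2 * h))) := by
  set a : ℝ := 1 - 1 / p
  have ha : 0 < a := by
    have : 1 / p < 1 := (div_lt_one (by linarith)).2 (by linarith)
    linarith
  set c : ℝ := 2 ^ a - (3 / 2 : ℝ) ^ a
  have hc : 0 < c := sub_pos.2 (Real.rpow_lt_rpow (by norm_num) (by norm_num) ha)
  refine ⟨c * (3 / 2 : ℝ) ^ (3 / 2 : ℝ) / √3, by positivity, 1, one_pos, fun h hh _ => ?_⟩
  have hdiff : (fun x => interpOne p h x - interpTwo p h x)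
      =ᵐ[volume.restrict (Ioo 0 (3 * h / 2))] fun x => c * h ^ a * x :=
    ae_restrict_of_forall_mem measurableSet_Ioo fun x hx =>
      interpOne_sub_interpTwo_of_le p hh hx.2.le
  calc ENNReal.ofReal (c * (3 / 2 : ℝ) ^ (3 / 2 : ℝ) / √3 * h ^ (5 / 2 - 1 / p))
      = eLpNorm (fun x => c * h ^ a * x) 2 (volume.restrict (Ioo 0 (3 * h / 2))) := by
        rw [eLpNorm_const_mul_id_two_restrict_Ioo _ (by positivity), abs_of_pos (by positivity),
          show 3 * h / 2 = 3 / 2 * h by ring, Real.mul_rpow (by norm_num) hh.le,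
          show (5 / 2 - 1 / p : ℝ) = a + 3 / 2 by ring, Real.rpow_add hh]
        ring_nf
    _ = eLpNorm (fun x => interpOne p h x - interpTwo p h x) 2
          (volume.restrict (Ioo 0 (3 * h / 2))) := (eLpNorm_congr_ae hdiff).symm
    _ ≤ _ := eLpNorm_mono_measure _ <|
          Measure.restrict_mono (Ioo_subset_Ioo le_rfl (by linarith)) le_rfl
end
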